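/- Let U = −(Y − f(X))² + (Y − f*(X))² where Y = f*(X) + ε, ε ~ N(0, σ²) independent of X, and |f(X)| ≤ M, |f*(X)| ≤ M almost surely. Then Var(U) ≤ 4(M² + σ²)·E[(f(X) − f*(X))²]. -/

import Mathlib

open MeasureTheory ProbabilityTheory
open scoped NNReal

open Real Set
open scoped ENNReal

lemma aux_int_sq_exp {b : ℝ} (hb : 0 < b) :
    Integrable (fun x : ℝ => x ^ 2 * rexp (-b * x ^ 2)) := by
  have h := integrable_rpow_mul_exp_neg_mul_sq hb (s := 2) (by norm_num)
  have he : (fun x : ℝ => x ^ (2:ℝ) * rexp (-b * x ^ 2))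
      = fun x : ℝ => x ^ 2 * rexp (-b * x ^ 2) := by
    funext x
    rw [show (2:ℝ) = ((2:ℕ):ℝ) by norm_num, Real.rpow_natCast]
  rwa [he] at h

lemma aux_integral_sq_exp {b : ℝ} (hb : 0 < b) :
    ∫ x : ℝ, x ^ 2 * rexp (-b * x ^ 2) = b ^ (-(3:ℝ)/2) * Real.sqrt π / 2 := by
  have hint := aux_int_sq_exp hb
  have hsplit := intervalIntegral.integral_Iic_add_Ioi (b := (0:ℝ)) (f := fun x : ℝ => x ^ 2 * rexp (-b * x ^ 2))
    hint.integrableOn hint.integrableOn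
  have hIic : ∫ x in Iic (0:ℝ), x ^ 2 * rexp (-b * x ^ 2)
      = ∫ x in Ioi (0:ℝ), x ^ 2 * rexp (-b * x ^ 2) := by
    have h := integral_comp_neg_Ioi (c := (0:ℝ)) (f := fun x : ℝ => x ^ 2 * rexp (-b * x ^ 2))
    simp only [neg_zero, neg_sq] at h
    exact h.symm
  have hIoi : ∫ x in Ioi (0:ℝ), x ^ 2 * rexp (-b * x ^ 2)
      = b ^ (-(3:ℝ)/2) * (1/2) * Real.Gamma ((2+1)/2) := by
    have h := integral_rpow_mul_exp_neg_mul_rpow (p := 2) (q := 2) (b := b)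
      (by norm_num) (by norm_num) hb
    have he : ∀ x : ℝ, x ^ (2:ℝ) * rexp (-b * x ^ (2:ℝ)) = x ^ 2 * rexp (-b * x ^ 2) := by
      intro x
      rw [show (2:ℝ) = ((2:ℕ):ℝ) by norm_num, Real.rpow_natCast]
    simp_rw [he] at h
    rw [h]
    norm_num
  have hGamma : Real.Gamma ((2+1)/2) = Real.sqrt π / 2 := by
    have h := Real.Gamma_add_one (s := 1/2) (by norm_num)
    rw [Real.Gamma_one_half_eq] at h
    rw [show ((2:ℝ)+1)/2 = 1/2 + 1 by norm_num, h]
    ring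
  rw [← hsplit, hIic, hIoi, hGamma]
  ring

lemma gaussianPDFReal_zero_eq (v : ℝ≥0) :
    gaussianPDFReal 0 v
      = fun x : ℝ => (Real.sqrt (2 * π * v))⁻¹ * rexp (-(2 * (v:ℝ))⁻¹ * x ^ 2) := by
  funext x
  rw [gaussianPDFReal]
  congr 1
  rw [sub_zero, div_eq_mul_inv]
  ring_nf

lemma gauss_int_eq {v : ℝ≥0} (hv : v ≠ 0) (g : ℝ → ℝ) :
    ∫ x, g x ∂(gaussianReal 0 v) = ∫ x, g x * gaussianPDFReal 0 v x := by
  rw [gaussianReal_of_var_ne_zero 0 hv]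
  have hd : gaussianPDF 0 v = fun x => ((Real.toNNReal (gaussianPDFReal 0 v x) : ℝ≥0) : ℝ≥0∞) := by
    funext x
    rfl
  rw [hd, integral_withDensity_eq_integral_smul
    ((measurable_gaussianPDFReal 0 v).real_toNNReal) g]
  congr 1
  funext x
  rw [NNReal.smul_def, smul_eq_mul, Real.coe_toNNReal _ (gaussianPDFReal_nonneg 0 v x), mul_comm]

lemma gauss_integrable_iff {v : ℝ≥0} (hv : v ≠ 0) (g : ℝ → ℝ) :
    Integrable g (gaussianReal 0 v)
      ↔ Integrable (fun x => g x * gaussianPDFReal 0 v x) := by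
  rw [gaussianReal_of_var_ne_zero 0 hv]
  rw [integrable_withDensity_iff (measurable_gaussianPDF 0 v)
    (Filter.Eventually.of_forall fun x => ENNReal.ofReal_lt_top)]
  refine integrable_congr (Filter.Eventually.of_forall fun x => ?_)
  simp only [gaussianPDF]
  rw [ENNReal.toReal_ofReal (gaussianPDFReal_nonneg 0 v x)]

lemma gauss_integrable_id (v : ℝ≥0) : Integrable (fun x : ℝ => x) (gaussianReal 0 v) := by
  by_cases hv : v = 0
  · rw [hv, gaussianReal_zero_var]
    exact (integrable_const ((0:ℝ))).congr (ae_eq_dirac (fun x : ℝ => x)).symm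
  · rw [gauss_integrable_iff hv, gaussianPDFReal_zero_eq]
    have hb : 0 < (2 * (v:ℝ))⁻¹ := by
      have : (0:ℝ) < v := by positivity
      positivity
    have h := (integrable_mul_exp_neg_mul_sq hb).const_mul (Real.sqrt (2 * π * v))⁻¹
    refine h.congr (Filter.Eventually.of_forall fun x => ?_)
    ring

lemma gauss_integrable_sq (v : ℝ≥0) : Integrable (fun x : ℝ => x ^ 2) (gaussianReal 0 v) := by
  by_cases hv : v = 0
  · rw [hv, gaussianReal_zero_var]
    exact (integrable_const ((0:ℝ)^2)).congr (ae_eq_dirac (fun x : ℝ => x ^ 2)).symm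
  · rw [gauss_integrable_iff hv, gaussianPDFReal_zero_eq]
    have hb : 0 < (2 * (v:ℝ))⁻¹ := by
      have : (0:ℝ) < v := by positivity
      positivity
    have h := (aux_int_sq_exp hb).const_mul (Real.sqrt (2 * π * v))⁻¹
    refine h.congr (Filter.Eventually.of_forall fun x => ?_)
    ring

lemma gauss_integral_id (v : ℝ≥0) : ∫ x, x ∂(gaussianReal 0 v) = 0 := by
  have hmap := gaussianReal_map_const_mul (μ := 0) (v := v) (-1)
  norm_num at hmap
  have key : ∫ x, x ∂((gaussianReal 0 v).map ((-1:ℝ) * ·))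
      = ∫ x, (-1:ℝ) * x ∂(gaussianReal 0 v) :=
    integral_map (measurable_id.const_mul (-1:ℝ)).aemeasurable aestronglyMeasurable_id
  simp only [neg_one_mul] at key
  rw [hmap, integral_neg] at key
  linarith

lemma gauss_integral_sq (v : ℝ≥0) : ∫ x, x ^ 2 ∂(gaussianReal 0 v) = v := by
  by_cases hv : v = 0
  · rw [hv, gaussianReal_zero_var, integral_dirac]
    norm_num
  · have hv' : (0:ℝ) < v := by positivity
    have h2v : (0:ℝ) < 2 * v := by positivity
    have hb : (0:ℝ) < (2 * (v:ℝ))⁻¹ := by positivity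
    rw [gauss_int_eq hv, gaussianPDFReal_zero_eq]
    have he : (fun x : ℝ => x ^ 2 * ((Real.sqrt (2 * π * v))⁻¹ * rexp (-(2 * (v:ℝ))⁻¹ * x ^ 2)))
        = fun x : ℝ => (Real.sqrt (2 * π * v))⁻¹ * (x ^ 2 * rexp (-(2 * (v:ℝ))⁻¹ * x ^ 2)) := by
      funext x; ring
    rw [he, integral_const_mul, aux_integral_sq_exp hb]
    have hbpow : ((2 * (v:ℝ))⁻¹) ^ (-(3:ℝ)/2) = (2 * (v:ℝ)) * Real.sqrt (2 * (v:ℝ)) := by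
      rw [Real.inv_rpow h2v.le, show (-(3:ℝ)/2) = -((3:ℝ)/2) by norm_num,
        Real.rpow_neg h2v.le, inv_inv, show ((3:ℝ)/2) = 1 + 1/2 by norm_num,
        Real.rpow_add h2v, Real.rpow_one, ← Real.sqrt_eq_rpow]
    rw [hbpow, show 2 * π * (v:ℝ) = π * (2 * v) by ring, Real.sqrt_mul Real.pi_nonneg]
    have hs : (0:ℝ) < Real.sqrt (2 * (v:ℝ)) := Real.sqrt_pos.2 h2v
    have hπ : (0:ℝ) < Real.sqrt π := Real.sqrt_pos.2 Real.pi_pos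
    rw [show Real.sqrt (2 * (v:ℝ)) = Real.sqrt (2 * (v:ℝ)) from rfl]
    field_simp

/-- With `Y = f*(X) + ε`, `ε ~ N(0,σ²)` independent of `X`,
`|f(X)| ≤ M`, `|f*(X)| ≤ M` a.s., and
`U = −(Y − f(X))² + (Y − f*(X))²`, we have
`Var(U) ≤ 4(M² + σ²)·E[(f(X) − f*(X))²]`. -/
theorem variance_U_bound {Ω E : Type*} [MeasurableSpace Ω] [MeasurableSpace E]
    (μ : Measure Ω) [IsProbabilityMeasure μ]
    (X : Ω → E) (ε : Ω → ℝ) (f fstar : E → ℝ) (M : ℝ) (σ2 : ℝ≥0)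
    (hX : Measurable X) (hε : Measurable ε)
    (hf : Measurable f) (hfstar : Measurable fstar)
    (hgauss : μ.map ε = gaussianReal 0 σ2)
    (hindep : IndepFun ε X μ)
    (hfM : ∀ᵐ ω ∂μ, |f (X ω)| ≤ M) (hfstarM : ∀ᵐ ω ∂μ, |fstar (X ω)| ≤ M) :
    variance (fun ω =>
        -(((fstar (X ω) + ε ω) - f (X ω)) ^ 2) +
          ((fstar (X ω) + ε ω) - fstar (X ω)) ^ 2) μ ≤
      4 * (M ^ 2 + (σ2 : ℝ)) * ∫ ω, (f (X ω) - fstar (X ω)) ^ 2 ∂μ := by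
  have hM : 0 ≤ M := by
    obtain ⟨ω, hω⟩ := hfM.exists
    exact le_trans (abs_nonneg _) hω
  set D : Ω → ℝ := fun ω => fstar (X ω) - f (X ω) with hDdef
  have hDmeas : Measurable D := (hfstar.comp hX).sub (hf.comp hX)
  have hDbd : ∀ᵐ ω ∂μ, |D ω| ≤ 2 * M := by
    filter_upwards [hfM, hfstarM] with ω h1 h2
    rw [abs_le] at h1 h2 ⊢
    simp only [hDdef]
    constructor <;> [linarith [h1.1, h1.2, h2.1, h2.2]; linarith [h1.1, h1.2, h2.1, h2.2]]
  have hDk : ∀ k : ℕ, Integrable (fun ω => D ω ^ k) μ := by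
    intro k
    refine (integrable_const ((2 * M) ^ k)).mono'
      ((hDmeas.pow_const k).aestronglyMeasurable) ?_
    filter_upwards [hDbd] with ω h
    rw [Real.norm_eq_abs, abs_pow]
    exact pow_le_pow_left₀ (abs_nonneg _) h k
  have hgmap : ∀ g : ℝ → ℝ, Measurable g → Integrable g (gaussianReal 0 σ2) →
      Integrable (fun ω => g (ε ω)) μ := by
    intro g hg hgint
    rw [← hgauss] at hgint
    exact (integrable_map_measure hg.aestronglyMeasurable hε.aemeasurable).1 hgint
  have hε1 : Integrable ε μ := hgmap (fun x => x) measurable_id (gauss_integrable_id σ2)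
  have hε2 : Integrable (fun ω => ε ω ^ 2) μ :=
    hgmap (fun x => x ^ 2) (measurable_id.pow_const 2) (gauss_integrable_sq σ2)
  have hEε : ∫ ω, ε ω ∂μ = 0 := by
    have h := integral_map (μ := μ) (f := fun x : ℝ => x) hε.aemeasurable aestronglyMeasurable_id
    rw [hgauss, gauss_integral_id] at h
    exact h.symm
  have hEε2 : ∫ ω, ε ω ^ 2 ∂μ = σ2 := by
    have h := integral_map (μ := μ) (f := fun x : ℝ => x ^ 2) hε.aemeasurable
      (measurable_id.pow_const 2).aestronglyMeasurable
    rw [hgauss, gauss_integral_sq] at h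
    exact h.symm
  have hind : ∀ k j : ℕ, ∫ ω, D ω ^ k * ε ω ^ j ∂μ
      = (∫ ω, D ω ^ k ∂μ) * ∫ ω, ε ω ^ j ∂μ := by
    intro k j
    have h : IndepFun (fun ω => D ω ^ k) (fun ω => ε ω ^ j) μ :=
      hindep.symm.comp (φ := fun x => (fstar x - f x) ^ k) (ψ := fun y => y ^ j)
        ((hfstar.sub hf).pow_const k) (measurable_id.pow_const j)
    exact h.integral_fun_mul_eq_mul_integral (hDmeas.pow_const k).aestronglyMeasurable
      (hε.pow_const j).aestronglyMeasurable
  have hI2 : Integrable (fun ω => D ω ^ 3 * ε ω) μ := by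
    refine hε1.bdd_mul (c := (2 * M) ^ 3) ((hDmeas.pow_const 3).aestronglyMeasurable) ?_
    filter_upwards [hDbd] with ω h
    rw [Real.norm_eq_abs, abs_pow]
    exact pow_le_pow_left₀ (abs_nonneg _) h 3
  have hI3 : Integrable (fun ω => D ω ^ 2 * ε ω ^ 2) μ := by
    refine hε2.bdd_mul (c := (2 * M) ^ 2) ((hDmeas.pow_const 2).aestronglyMeasurable) ?_
    filter_upwards [hDbd] with ω h
    rw [Real.norm_eq_abs, abs_pow]
    exact pow_le_pow_left₀ (abs_nonneg _) h 2
  have h31 : ∫ ω, D ω ^ 3 * ε ω ∂μ = (∫ ω, D ω ^ 3 ∂μ) * ∫ ω, ε ω ∂μ := by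
    have h := hind 3 1
    simpa [pow_one] using h
  have hUeq : (fun ω =>
        -(((fstar (X ω) + ε ω) - f (X ω)) ^ 2) +
          ((fstar (X ω) + ε ω) - fstar (X ω)) ^ 2)
      = fun ω => -(D ω ^ 2 + 2 * D ω * ε ω) := by
    funext ω
    simp only [hDdef]
    ring
  rw [hUeq]
  have hUmeas : AEStronglyMeasurable (fun ω => -(D ω ^ 2 + 2 * D ω * ε ω)) μ :=
    (((hDmeas.pow_const 2).add ((hDmeas.const_mul 2).mul hε)).neg).aestronglyMeasurable
  have hsq : ∫ ω, (f (X ω) - fstar (X ω)) ^ 2 ∂μ = ∫ ω, D ω ^ 2 ∂μ := by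
    refine integral_congr_ae (Filter.Eventually.of_forall fun ω => ?_)
    simp only [hDdef]
    ring
  have hD2nonneg : 0 ≤ ∫ ω, D ω ^ 2 ∂μ := integral_nonneg fun ω => sq_nonneg _
  have key : ∫ ω, D ω ^ 4 ∂μ ≤ 4 * M ^ 2 * ∫ ω, D ω ^ 2 ∂μ := by
    rw [← integral_const_mul]
    refine integral_mono_ae (hDk 4) ((hDk 2).const_mul _) ?_
    filter_upwards [hDbd] with ω h
    have h2 : D ω ^ 2 ≤ (2 * M) ^ 2 := by
      rw [← sq_abs]
      exact pow_le_pow_left₀ (abs_nonneg _) h 2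
    nlinarith [sq_nonneg (D ω)]
  calc variance (fun ω => -(D ω ^ 2 + 2 * D ω * ε ω)) μ
      ≤ μ[(fun ω => -(D ω ^ 2 + 2 * D ω * ε ω)) ^ 2] := variance_le_expectation_sq hUmeas
    _ = ∫ ω, (D ω ^ 4 + 4 * (D ω ^ 3 * ε ω) + 4 * (D ω ^ 2 * ε ω ^ 2)) ∂μ := by
        refine integral_congr_ae (Filter.Eventually.of_forall fun ω => ?_)
        simp only [Pi.pow_apply]
        ring
    _ = (∫ ω, D ω ^ 4 ∂μ) + 4 * ((∫ ω, D ω ^ 3 ∂μ) * ∫ ω, ε ω ∂μ)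
        + 4 * ((∫ ω, D ω ^ 2 ∂μ) * ∫ ω, ε ω ^ 2 ∂μ) := by
        have e1 : ∫ ω, (D ω ^ 4 + 4 * (D ω ^ 3 * ε ω) + 4 * (D ω ^ 2 * ε ω ^ 2)) ∂μ
            = (∫ ω, (D ω ^ 4 + 4 * (D ω ^ 3 * ε ω)) ∂μ) + ∫ ω, 4 * (D ω ^ 2 * ε ω ^ 2) ∂μ :=
          integral_add ((hDk 4).add (hI2.const_mul 4)) (hI3.const_mul 4)
        have e2 : ∫ ω, (D ω ^ 4 + 4 * (D ω ^ 3 * ε ω)) ∂μ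
            = (∫ ω, D ω ^ 4 ∂μ) + ∫ ω, 4 * (D ω ^ 3 * ε ω) ∂μ :=
          integral_add (hDk 4) (hI2.const_mul 4)
        rw [e1, e2, integral_const_mul, integral_const_mul, h31, hind 2 2]
    _ ≤ 4 * (M ^ 2 + (σ2 : ℝ)) * ∫ ω, (f (X ω) - fstar (X ω)) ^ 2 ∂μ := by
        rw [hEε, hEε2, hsq]
        nlinarith [key, hD2nonneg, σ2.coe_nonneg]
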